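/- Let A be the operator of multiplication by a measurable function φ with 0 < m ≤ |φ| ≤ M on [0,1]. Then A is continuously invertible on L²([0,1]) with ‖A⁻¹‖ ≤ 1/m, and hence for any f₁,…,fₙ ∈ L²([0,1]), G(φf₁, …, φfₙ) ≥ m^{2n} G(f₁, …, fₙ). -/

import Mathlib

/-!
Since `|φ| ≥ m`, multiplication by `φ` is bounded below by `m`, and multiplication by `1/φ`
supplies preimages, so `A` is invertible with `‖A⁻¹‖ ≤ 1/m`. Applying `‖A⁻¹ g‖ ≤ ‖A⁻¹‖ ‖g‖` to
`g = ∑ cᵢ A fᵢ` gives `G(f) ≤ ‖A⁻¹‖² G(Af)` in the Loewner order, and the determinant is monotone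
on positive semidefinite matrices: with `S = √Y`, `S⁻¹ X S⁻¹ ≥ 1` has all eigenvalues `≥ 1`.
-/

open MeasureTheory
open scoped RealInnerProductSpace

noncomputable abbrev L2unit : Type :=
  Lp ℝ 2 (volume.restrict (Set.Icc (0 : ℝ) 1))

open scoped ENNReal MatrixOrder

namespace Matrix

theorem one_le_det_of_one_le {n : Type*} [Fintype n] [DecidableEq n] {M : Matrix n n ℝ}
    (h : 1 ≤ M) : 1 ≤ M.det := by
  have hM : M.IsHermitian := by simpa using (le_iff.mp h).isHermitian.add isHermitian_one
  rw [hM.det_eq_prod_eigenvalues]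
  exact Finset.one_le_prod fun i _ => by
    simpa using (CFC.one_le_iff M hM).mp h _ (hM.eigenvalues_mem_spectrum_real i)

theorem det_le_det {n : Type*} [Fintype n] [DecidableEq n] {X Y : Matrix n n ℝ}
    (hY : 0 ≤ Y) (hYX : Y ≤ X) : Y.det ≤ X.det := by
  rcases (nonneg_iff_posSemidef.mp hY).det_nonneg.eq_or_lt with h0 | h0
  · exact h0 ▸ (nonneg_iff_posSemidef.mp (hY.trans hYX)).det_nonneg
  set S := CFC.sqrt Y
  have hSS : S * S = Y := CFC.sqrt_mul_sqrt_self Y hY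
  have hSdet : S.det * S.det = Y.det := by rw [← det_mul, hSS]
  have hS0 : S.det ≠ 0 := fun h => by simp [h, ← hSdet] at h0
  have hSinv : IsSelfAdjoint S⁻¹ := IsHermitian.inv (IsSelfAdjoint.of_nonneg (CFC.sqrt_nonneg Y))
  have h1 : 1 ≤ S⁻¹ * X * S⁻¹ :=
    calc (1 : Matrix n n ℝ) = S⁻¹ * Y * S⁻¹ := by
          rw [← hSS, ← Matrix.mul_assoc, Matrix.mul_assoc (S⁻¹ * S), mul_nonsing_inv _ hS0.isUnit,
            nonsing_inv_mul _ hS0.isUnit, Matrix.mul_one]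
      _ ≤ S⁻¹ * X * S⁻¹ := hSinv.conjugate_le_conjugate hYX
  have h2 := one_le_det_of_one_le h1
  rw [det_mul, det_mul, det_nonsing_inv, Ring.inverse_eq_inv'] at h2
  rw [← hSdet]
  calc S.det * S.det = S.det * S.det * 1 := by ring
    _ ≤ S.det * S.det * (S.det⁻¹ * X.det * S.det⁻¹) := by gcongr; exact mul_self_nonneg _
    _ = X.det := by field_simp

variable {ι E F : Type*} [Fintype ι] [DecidableEq ι]
  [NormedAddCommGroup E] [InnerProductSpace ℝ E] [NormedAddCommGroup F] [InnerProductSpace ℝ F]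
  {A : E →L[ℝ] F} {B : F →L[ℝ] E}

theorem det_gram_le_of_comp_eq_id (hBA : B.comp A = .id ℝ E) (v : ι → E) :
    (gram ℝ v).det ≤ ‖B‖ ^ (2 * Fintype.card ι) * (gram ℝ (A ∘ v)).det := by
  have hv : B ∘ A ∘ v = v := funext fun i => congrArg (· (v i)) hBA
  have hle : gram ℝ v ≤ ‖B‖ ^ 2 • gram ℝ (A ∘ v) := by
    simpa only [le_iff, hv] using posSemidef_opNorm_smul_gram_sub_gram (A ∘ v) B
  calc (gram ℝ v).det ≤ (‖B‖ ^ 2 • gram ℝ (A ∘ v)).det :=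
        det_le_det (posSemidef_gram ℝ v).nonneg hle
    _ = _ := by rw [det_smul, pow_mul]

theorem pow_mul_det_gram_le_det_gram_comp (hBA : B.comp A = .id ℝ E) {c : ℝ} (hc : 0 < c)
    (hB : ‖B‖ ≤ c⁻¹) (v : ι → E) :
    c ^ (2 * Fintype.card ι) * (gram ℝ v).det ≤ (gram ℝ (A ∘ v)).det := by
  have hcB : c * ‖B‖ ≤ 1 := by rwa [← le_inv_mul_iff₀ hc, mul_one]
  have hdet : 0 ≤ (gram ℝ (A ∘ v)).det := (posSemidef_gram ℝ _).det_nonneg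
  calc c ^ (2 * Fintype.card ι) * (gram ℝ v).det
      ≤ c ^ (2 * Fintype.card ι) * (‖B‖ ^ (2 * Fintype.card ι) * (gram ℝ (A ∘ v)).det) := by
        gcongr
        exact det_gram_le_of_comp_eq_id hBA v
    _ = (c * ‖B‖) ^ (2 * Fintype.card ι) * (gram ℝ (A ∘ v)).det := by ring
    _ ≤ (gram ℝ (A ∘ v)).det := mul_le_of_le_one_left hdet (pow_le_one₀ (by positivity) hcB)

end Matrix

theorem ContinuousLinearMap.exists_inverse_of_surjective_of_bound {𝕜 E F : Type*}
    [NontriviallyNormedField 𝕜] [NormedAddCommGroup E] [NormedAddCommGroup F]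
    [NormedSpace 𝕜 E] [NormedSpace 𝕜 F] (A : E →L[𝕜] F) (hA : Function.Surjective A)
    {m : ℝ} (hm : 0 < m) (hbound : ∀ x, m * ‖x‖ ≤ ‖A x‖) :
    ∃ B : F →L[𝕜] E, B.comp A = .id 𝕜 E ∧ A.comp B = .id 𝕜 F ∧ ‖B‖ ≤ m⁻¹ := by
  have hinj : Function.Injective A := by
    refine (injective_iff_map_eq_zero A).mpr fun x hx => norm_eq_zero.mp ?_
    have := hbound x
    rw [hx, norm_zero] at this
    nlinarith [norm_nonneg x]
  let e₀ := LinearEquiv.ofBijective (A : E →ₗ[𝕜] F) ⟨hinj, hA⟩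
  have hinv : ∀ y, ‖e₀.symm y‖ ≤ m⁻¹ * ‖y‖ := fun y => by
    rw [le_inv_mul_iff₀ hm]
    simpa only [show A (e₀.symm y) = y from e₀.apply_symm_apply y] using hbound (e₀.symm y)
  let e := e₀.toContinuousLinearEquivOfBounds ‖A‖ m⁻¹ A.le_opNorm hinv
  refine ⟨e.symm, ?_, ?_, e.symm.toContinuousLinearMap.opNorm_le_bound (by positivity) hinv⟩
  · ext x; exact e.symm_apply_apply x
  · ext y; exact e.apply_symm_apply y

def IsMulOperator {α : Type*} [MeasurableSpace α] {μ : Measure α} {p : ℝ≥0∞}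
    (φ : α → ℝ) (A : Lp ℝ p μ → Lp ℝ p μ) : Prop :=
  ∀ f : Lp ℝ p μ, (A f : α → ℝ) =ᵐ[μ] fun x => φ x * f x

namespace IsMulOperator

variable {α : Type*} [MeasurableSpace α] {μ : Measure α} {p : ℝ≥0∞}
  {φ : α → ℝ} {A : Lp ℝ p μ → Lp ℝ p μ} {m : ℝ}

theorem mul_norm_le_norm [Fact (1 ≤ p)] (hA : IsMulOperator φ A) (hm : 0 ≤ m)
    (hφ : ∀ᵐ x ∂μ, m ≤ |φ x|) (f : Lp ℝ p μ) : m * ‖f‖ ≤ ‖A f‖ := by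
  have h : ‖m • f‖ ≤ ‖A f‖ := by
    refine Lp.norm_le_norm_of_ae_le ?_
    filter_upwards [Lp.coeFn_smul m f, hA f, hφ] with x hmf hAf hφx
    rw [hmf, hAf, Pi.smul_apply, smul_eq_mul, norm_mul, norm_mul, Real.norm_of_nonneg hm]
    exact mul_le_mul_of_nonneg_right hφx (norm_nonneg _)
  rwa [norm_smul, Real.norm_of_nonneg hm] at h

theorem surjective (hA : IsMulOperator φ A) (hφm : Measurable φ) (hm : 0 < m)
    (hφ : ∀ᵐ x ∂μ, m ≤ |φ x|) : Function.Surjective A := by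
  intro g
  have hmem : MemLp (fun x => (φ x)⁻¹ * g x) p μ := by
    refine (Lp.memLp g).const_mul m⁻¹ |>.of_le
      (hφm.inv.aestronglyMeasurable.mul (Lp.aestronglyMeasurable g)) ?_
    filter_upwards [hφ] with x hφx
    rw [norm_mul, norm_mul, norm_inv, Real.norm_of_nonneg (inv_nonneg.mpr hm.le)]
    exact mul_le_mul_of_nonneg_right (inv_anti₀ hm hφx) (norm_nonneg _)
  refine ⟨hmem.toLp _, Lp.ext ?_⟩
  filter_upwards [hA (hmem.toLp _), hmem.coeFn_toLp, hφ] with x hAx hx hφx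
  have : φ x ≠ 0 := by
    intro h
    rw [h, abs_zero] at hφx
    linarith
  rw [hAx, hx, mul_inv_cancel_left₀ this]

end IsMulOperator

/-- The operator `A` of multiplication by a measurable `φ` with `0 < m ≤ |φ| ≤ M` is
continuously invertible on `L²([0,1])` with `‖A⁻¹‖ ≤ 1/m`, and hence
`G(φf₁,…,φfₙ) ≥ m^{2n} G(f₁,…,fₙ)` for all `f₁,…,fₙ ∈ L²([0,1])`. -/
theorem multiplication_operator_invertible_gram (φ : ℝ → ℝ) (hφ : Measurable φ)
    {m M : ℝ} (hm : 0 < m) (hbound : ∀ r, m ≤ |φ r| ∧ |φ r| ≤ M)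
    (A : L2unit →L[ℝ] L2unit)
    (hA : ∀ f : L2unit, (A f : ℝ → ℝ) =ᵐ[volume.restrict (Set.Icc (0 : ℝ) 1)]
      fun r => φ r * f r) :
    (∃ B : L2unit →L[ℝ] L2unit,
        B.comp A = ContinuousLinearMap.id ℝ L2unit ∧
        A.comp B = ContinuousLinearMap.id ℝ L2unit ∧ ‖B‖ ≤ 1 / m) ∧
      ∀ (n : ℕ) (f : Fin n → L2unit),
        Matrix.det (Matrix.of fun i j => ⟪A (f i), A (f j)⟫) ≥
          m ^ (2 * n) * Matrix.det (Matrix.of fun i j => ⟪f i, f j⟫) := by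
  have hmul : IsMulOperator φ A := hA
  have hlow : ∀ᵐ r ∂volume.restrict (Set.Icc (0 : ℝ) 1), m ≤ |φ r| :=
    .of_forall fun r => (hbound r).1
  obtain ⟨B, hBA, hAB, hB⟩ := A.exists_inverse_of_surjective_of_bound
    (hmul.surjective hφ hm hlow) hm (hmul.mul_norm_le_norm hm.le hlow)
  refine ⟨⟨B, hBA, hAB, by rwa [one_div]⟩, fun n f => ?_⟩
  have h := Matrix.pow_mul_det_gram_le_det_gram_comp hBA hm hB f
  rw [Fintype.card_fin] at h
  exact h
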